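/- arXiv:math/0611027 — 2 statements merged into one kernel-verified Lean document; each statement's English description precedes it below -/
import Mathlib

section
/- ln 2 = Σ_{n=1}^{∞} (1/(2n)) · C(2n,n) · (1/4)^n. -/
/-!
By Wallis' formula `C(2n,n) / 4ⁿ = (1/π) ∫₀^π sin²ⁿ x dx`, and on `(0, π) \ {π/2}` the series
`∑_{n ≥ 1} sin²ⁿ x / (2n) = -½ log (1 - sin² x)` sums to `-log |cos x|`. The terms are
nonnegative, so the sum may be integrated termwise, and `∫₀^π log |cos x| dx = -π log 2`.
-/

open Real MeasureTheory Finset Interval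

theorem prod_range_odd_div_even_eq_centralBinom_div (n : ℕ) :
    ∏ i ∈ range n, (2 * (i : ℝ) + 1) / (2 * i + 2) = n.centralBinom / 4 ^ n := by
  induction n with
  | zero => simp
  | succ n ih =>
    have h : ((n : ℝ) + 1) * (n + 1).centralBinom = 2 * (2 * n + 1) * n.centralBinom := by
      exact_mod_cast Nat.succ_mul_centralBinom_succ n
    rw [prod_range_succ, ih, eq_div_iff (by positivity)]
    field_simp
    linear_combination -2 * 4 ^ n * h

theorem integral_sin_pow_two_mul (n : ℕ) :
    ∫ x in 0..π, sin x ^ (2 * n) = π * n.centralBinom / 4 ^ n := by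
  rw [integral_sin_pow_even, prod_range_odd_div_even_eq_centralBinom_div, mul_div_assoc]

-- `Real.log` is even, so `log ∘ sin` is `π`-periodic although `sin` is not.
theorem periodic_log_sin : Function.Periodic (fun x => log (sin x)) π := fun x => by
  simp only [sin_add_pi, log_neg_eq_log]

theorem integral_log_cos_zero_pi : ∫ x in 0..π, log (cos x) = -log 2 * π := by
  simp_rw [← sin_add_pi_div_two]
  rw [intervalIntegral.integral_comp_add_right (fun x => log (sin x)), zero_add, add_comm π,
    periodic_log_sin.intervalIntegral_add_eq (π / 2) 0, zero_add, integral_log_sin_zero_pi]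

theorem hasSum_sin_pow_div_of_cos_ne_zero {x : ℝ} (hx : cos x ≠ 0) :
    HasSum (fun n : ℕ => sin x ^ (2 * (n + 1)) / (2 * (n + 1))) (-log (cos x)) := by
  have h_abs : |sin x ^ 2| < 1 := by
    rw [abs_of_nonneg (sq_nonneg _), sin_sq]
    linarith [show 0 < cos x ^ 2 by positivity]
  have h_log : -log (cos x) = -log (1 - sin x ^ 2) / 2 := by
    rw [← cos_sq', log_pow]
    push_cast
    ring
  have h_terms : (fun n : ℕ => sin x ^ (2 * (n + 1)) / (2 * (n + 1))) =
      fun n : ℕ => (sin x ^ 2) ^ (n + 1) / (n + 1) / 2 :=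
    funext fun n => by rw [pow_mul, div_div, mul_comm (n + 1 : ℝ)]
  rw [h_log, h_terms]
  exact (hasSum_pow_div_log_of_abs_lt_one h_abs).div_const 2

theorem ae_hasSum_sin_pow_div :
    ∀ᵐ x, x ∈ Ι 0 π →
      HasSum (fun n : ℕ => sin x ^ (2 * (n + 1)) / (2 * (n + 1))) (-log (cos x)) := by
  filter_upwards [Measure.ae_ne volume (π / 2)] with x hx hmem
  refine hasSum_sin_pow_div_of_cos_ne_zero fun hcos => hx ?_
  rw [Set.uIoc_of_le pi_pos.le] at hmem
  exact injOn_cos ⟨hmem.1.le, hmem.2⟩ ⟨pi_div_two_pos.le, by linarith [pi_pos]⟩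
    (hcos.trans cos_pi_div_two.symm)

theorem intervalIntegral.hasSum_integral_of_nonneg {a b : ℝ} {μ : Measure ℝ}
    {F : ℕ → ℝ → ℝ} {f : ℝ → ℝ} (hF : ∀ n, IntervalIntegrable (F n) μ a b)
    (hF_nonneg : ∀ n t, 0 ≤ F n t) (hf : IntervalIntegrable f μ a b)
    (h_lim : ∀ᵐ t ∂μ, t ∈ Ι a b → HasSum (fun n => F n t) (f t)) :
    HasSum (fun n => ∫ t in a..b, F n t ∂μ) (∫ t in a..b, f t ∂μ) := by
  refine hasSum_integral_of_dominated_convergence F (fun n => (hF n).def'.aestronglyMeasurable)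
    (fun n => .of_forall fun t _ => (Real.norm_of_nonneg (hF_nonneg n t)).le)
    (h_lim.mono fun t ht hmem => (ht hmem).summable) ?_ h_lim
  exact hf.congr_ae <| (ae_restrict_iff' measurableSet_uIoc).2 <|
    h_lim.mono fun t ht hmem => (ht hmem).tsum_eq.symm

theorem hasSum_integral_sin_pow_div :
    HasSum (fun n : ℕ => ∫ x in 0..π, sin x ^ (2 * (n + 1)) / (2 * (n + 1))) (π * log 2) := by
  have h_int : ∫ x in 0..π, -log (cos x) = π * log 2 := by
    rw [intervalIntegral.integral_neg, integral_log_cos_zero_pi]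
    ring
  rw [← h_int]
  exact intervalIntegral.hasSum_integral_of_nonneg
    (fun n => ((continuous_sin.pow _).div_const _).intervalIntegrable _ _)
    (fun n x => div_nonneg ((even_two_mul _).pow_nonneg _) (by positivity))
    intervalIntegrable_log_cos.neg ae_hasSum_sin_pow_div

/-- `ln 2 = Σ_{n=1}^∞ (1/(2n)) C(2n,n) (1/4)^n`. -/
theorem log_two_eq_series :
    HasSum (fun n : ℕ =>
      (1 / (2 * (n + 1) : ℝ)) * ((2 * (n + 1)).choose (n + 1) : ℝ) * (1 / 4 : ℝ) ^ (n + 1))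
      (Real.log 2) := by
  refine (hasSum_mul_left_iff pi_ne_zero).1 (hasSum_integral_sin_pow_div.congr_fun fun n => ?_)
  rw [intervalIntegral.integral_div, integral_sin_pow_two_mul,
    ← Nat.centralBinom_eq_two_mul_choose, one_div_pow]
  ring
end

section
/- Define f_n(y) = Σ_{j=0}^{n} (1/n)·C(n,j)·C(2j,j)·y^j for n ≥ 1, and F(x,y) = Σ_{n≥1} f_n(y)·x^n. Then for real x, y with 0 < x < 1, y ≥ 0, and 4xy/(1−x) ≤ 1, one has F(x,y) = ln 4 − 2·ln(√(1−x) + √(1 − x − 4xy)). -/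
/-!
Summing over `n` first, the coefficient of `C(2j,j) y^j` is `∑_n C(n,j) x^n / n`, which is
`-log (1 - x)` for `j = 0` and `(x / (1 - x))^j / j` for `j ≥ 1`. All terms are nonnegative, so the
double series may be summed in either order, and with `t = x y / (1 - x) ≤ 1/4` it becomes
`-log (1 - x) + ∑_{j ≥ 1} C(2j,j) t^j / j`. Since `C(2j,j) / 4^j` is the coefficient of the binomial
series of `(1 - u)^(-1/2)`, the derivative of the last series is
`(1/√(1 - 4t) - 1) / t = 4 / (√(1 - 4t) (1 + √(1 - 4t)))`, which is also the derivative of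
`2 log 2 - 2 log (1 + √(1 - 4t))`. At the radius of convergence `t = 1/4` the identity follows by
monotone convergence.
-/

open Real Filter Topology Set
open scoped Nat

theorem ascPochhammer_eval_half {K : Type*} [Field K] [CharZero K] (n : ℕ) :
    (ascPochhammer K n).eval (1 / 2) = n ! * Nat.centralBinom n / 4 ^ n := by
  induction n with
  | zero => simp
  | succ n ih =>
    have h : ((n + 1 : ℕ) : K) * Nat.centralBinom (n + 1) =
        2 * (2 * n + 1) * Nat.centralBinom n := by
      exact_mod_cast Nat.succ_mul_centralBinom_succ n
    rw [ascPochhammer_succ_eval, ih, Nat.factorial_succ, Nat.cast_mul, mul_comm _ (n ! : K),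
      mul_assoc, h]
    field_simp
    ring

theorem Ring.multichoose_half {K : Type*} [Field K] [CharZero K] (n : ℕ) :
    Ring.multichoose (1 / 2 : K) n = Nat.centralBinom n / 4 ^ n := by
  have h := Ring.factorial_nsmul_multichoose_eq_ascPochhammer (1 / 2 : K) n
  rw [Polynomial.ascPochhammer_smeval_eq_eval, ascPochhammer_eval_half, nsmul_eq_mul] at h
  have : (n ! : K) ≠ 0 := Nat.cast_ne_zero.mpr n.factorial_ne_zero
  field_simp at h ⊢
  linear_combination h

theorem hasSum_centralBinom_mul_pow {t : ℝ} (ht : |t| < 1 / 4) :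
    HasSum (fun n => (Nat.centralBinom n : ℝ) * t ^ n) (1 / √(1 - 4 * t)) := by
  have h4t : 4 * t ∈ Metric.eball (0 : ℝ) 1 := by
    rw [Metric.mem_eball, edist_dist, dist_zero_right, ENNReal.ofReal_lt_one, norm_mul,
      Real.norm_eq_abs, Real.norm_eq_abs, abs_of_pos four_pos]
    linarith
  have hcoef (n : ℕ) :
      Ring.choose (1 / 2 + n - 1 : ℝ) n • (4 * t) ^ n = Nat.centralBinom n * t ^ n := by
    rw [← Ring.multichoose_eq, Ring.multichoose_half, smul_eq_mul, mul_pow]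
    field_simp
  simpa only [FormalMultilinearSeries.ofScalars_apply_eq, zero_add, ← sqrt_eq_rpow, hcoef] using
    (one_div_one_sub_rpow_hasFPowerSeriesOnBall_zero (1 / 2)).hasSum h4t

theorem hasSum_centralBinom_succ_mul_pow {t : ℝ} (ht : |t| < 1 / 4) :
    HasSum (fun n => (Nat.centralBinom (n + 1) : ℝ) * t ^ n)
      (4 / (√(1 - 4 * t) * (1 + √(1 - 4 * t)))) := by
  rcases eq_or_ne t 0 with rfl | ht0
  · convert hasSum_ite_eq 0 (2 : ℝ) using 2 with n
    · rcases n with _ | n <;> simp [Nat.centralBinom]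
    · norm_num
  have hpos : 0 < 1 - 4 * t := by linarith [le_abs_self t]
  have hsq : √(1 - 4 * t) ^ 2 = 1 - 4 * t := sq_sqrt hpos.le
  have hsq0 : 0 < √(1 - 4 * t) := sqrt_pos.mpr hpos
  have hterm (n : ℕ) : (Nat.centralBinom (n + 1) : ℝ) * t ^ (n + 1) / t =
      Nat.centralBinom (n + 1) * t ^ n := by
    field_simp
    ring
  have hval : (1 / √(1 - 4 * t) - ∑ i ∈ Finset.range 1, (Nat.centralBinom i : ℝ) * t ^ i) / t =
      4 / (√(1 - 4 * t) * (1 + √(1 - 4 * t))) := by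
    simp only [Finset.sum_range_one, Nat.centralBinom_zero]
    field_simp
    linear_combination -hsq
  simpa only [hterm, hval] using
    ((hasSum_nat_add_iff' 1).mpr (hasSum_centralBinom_mul_pow ht)).div_const t

theorem hasDerivAt_tsum_mul_pow {a : ℕ → ℝ} {r t : ℝ}
    (ha : Summable fun n => (n + 1) * a (n + 1) * r ^ n) (ht : |t| < r) :
    HasDerivAt (fun s => ∑' n, a n * s ^ n) (∑' n, (n + 1) * a (n + 1) * t ^ n) t := by
  have hr : 0 < r := (abs_nonneg t).trans_lt ht
  have hbound (s : ℝ) (hs : |s| ≤ r) (n : ℕ) :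
      ‖a n * (n * s ^ (n - 1))‖ ≤ |a n * n| * r ^ (n - 1) := by
    rw [norm_mul, norm_mul, norm_pow, Real.norm_eq_abs, Real.norm_eq_abs, Real.norm_eq_abs,
      ← mul_assoc, ← abs_mul]
    gcongr
  have hu : Summable fun n => |a n * n| * r ^ (n - 1) := by
    rw [← summable_nat_add_iff 1]
    refine ha.abs.congr fun n => ?_
    simp only [abs_mul, abs_pow, abs_of_pos hr, Nat.add_sub_cancel]
    push_cast
    rw [abs_of_pos (by positivity : (0 : ℝ) < n + 1)]
    ring
  have hshift : Summable fun n => (n + 1) * a (n + 1) * t ^ n :=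
    ((summable_nat_add_iff 1).mpr hu).of_norm_bounded fun n => by
      simpa [mul_comm, mul_left_comm, mul_assoc] using hbound t ht.le (n + 1)
  refine (hasDerivAt_tsum_of_isPreconnected hu Metric.isOpen_ball (convex_ball 0 r).isPreconnected
    (fun n s _ => (hasDerivAt_pow n s).const_mul (a n))
    (fun n s hs => hbound s (by simpa using (Metric.mem_ball.mp hs).le) n) (Metric.mem_ball_self hr)
    ?_ (by simpa using ht)).congr_deriv ?_
  · exact (hasSum_single 0 fun n hn => by simp [hn]).summable
  · have h : HasSum (fun n => a (n + 1) * (((n + 1 : ℕ) : ℝ) * t ^ (n + 1 - 1)))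
        (∑' n, (n + 1) * a (n + 1) * t ^ n) := by
      convert hshift.hasSum using 2 with n
      push_cast
      ring
    rw [(HasSum.zero_add (f := fun n => a n * (n * t ^ (n - 1))) h).tsum_eq]
    simp

theorem hasDerivAt_two_mul_log_one_add_sqrt {s : ℝ} (hs : s < 1 / 4) :
    HasDerivAt (fun u => 2 * log (1 + √(1 - 4 * u)))
      (-(4 / (√(1 - 4 * s) * (1 + √(1 - 4 * s))))) s := by
  have hpos : 0 < 1 - 4 * s := by linarith
  have hsq0 : 0 < √(1 - 4 * s) := sqrt_pos.mpr hpos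
  have h := ((((hasDerivAt_id s).const_mul 4).const_sub 1).sqrt hpos.ne').const_add 1
    |>.log (by positivity) |>.const_mul 2
  simp only [id] at h
  refine h.congr_deriv ?_
  field_simp

/-- The `n = 0` term is `1 / 0 * t ^ 0 = 0`. -/
theorem hasSum_centralBinom_div_mul_pow_of_abs_lt {t : ℝ} (ht : |t| < 1 / 4) :
    HasSum (fun n => (Nat.centralBinom n : ℝ) / n * t ^ n)
      (2 * log 2 - 2 * log (1 + √(1 - 4 * t))) := by
  set L := fun s : ℝ => ∑' n, (Nat.centralBinom n : ℝ) / n * s ^ n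
  set g := fun s : ℝ => 2 * log 2 - 2 * log (1 + √(1 - 4 * s))
  have hcoef (n : ℕ) : (n + 1) * (Nat.centralBinom (n + 1) / (n + 1 : ℕ) : ℝ) =
      Nat.centralBinom (n + 1) := by
    push_cast
    field_simp
  have hderiv (s : ℝ) (hs : s ∈ Metric.ball 0 (1 / 4)) :
      HasDerivAt L (4 / (√(1 - 4 * s) * (1 + √(1 - 4 * s)))) s ∧
      HasDerivAt g (4 / (√(1 - 4 * s) * (1 + √(1 - 4 * s)))) s := by
    rw [mem_ball_zero_iff, Real.norm_eq_abs] at hs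
    obtain ⟨r, hsr, hr⟩ := exists_between hs
    have hr' : |r| < 1 / 4 := by rwa [abs_of_pos ((abs_nonneg s).trans_lt hsr)]
    have hL := hasDerivAt_tsum_mul_pow (a := fun n => (Nat.centralBinom n : ℝ) / n)
      (by simpa only [hcoef] using (hasSum_centralBinom_succ_mul_pow hr').summable) hsr
    simp only [hcoef, (hasSum_centralBinom_succ_mul_pow hs).tsum_eq] at hL
    refine ⟨hL, ?_⟩
    simpa using (hasDerivAt_two_mul_log_one_add_sqrt (lt_of_abs_lt hs)).const_sub (2 * log 2)
  have h0 : L 0 = g 0 := by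
    have hzero : (fun n : ℕ => (Nat.centralBinom n : ℝ) / n * 0 ^ n) = fun _ => 0 :=
      funext fun n => by rcases n with _ | n <;> simp
    norm_num [L, g, hzero, tsum_zero]
  have heq : Set.EqOn L g (Metric.ball 0 (1 / 4)) :=
    Metric.isOpen_ball.eqOn_of_deriv_eq (convex_ball _ _).isPreconnected
      (fun s hs => (hderiv s hs).1.differentiableAt.differentiableWithinAt)
      (fun s hs => (hderiv s hs).2.differentiableAt.differentiableWithinAt)
      (fun s hs => (hderiv s hs).1.deriv.trans (hderiv s hs).2.deriv.symm)
      (Metric.mem_ball_self (by norm_num)) h0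
  have hsum : Summable fun n => (Nat.centralBinom n : ℝ) / n * t ^ n := by
    refine (hasSum_centralBinom_mul_pow (t := |t|) (by rwa [abs_abs])).summable.of_norm_bounded
      fun n => ?_
    rw [norm_mul, norm_pow, Real.norm_eq_abs, Real.norm_eq_abs, abs_of_nonneg (by positivity)]
    gcongr
    rcases n with _ | n
    · simp
    · exact div_le_self (by positivity) (by simp)
  convert hsum.hasSum using 1
  exact (heq (by simpa using ht)).symm

theorem hasSum_mul_pow_of_nonneg_of_continuousWithinAt {a : ℕ → ℝ} {g : ℝ → ℝ} {r : ℝ}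
    (hr : 0 < r) (ha : ∀ n, 0 ≤ a n) (hg : ∀ t ∈ Ico 0 r, HasSum (fun n => a n * t ^ n) (g t))
    (hgr : ContinuousWithinAt g (Iio r) r) :
    HasSum (fun n => a n * r ^ n) (g r) := by
  have hev : ∀ᶠ t in 𝓝[<] r, t ∈ Ico 0 r := Ico_mem_nhdsLT hr
  have hnonneg (n : ℕ) : 0 ≤ a n * r ^ n := mul_nonneg (ha n) (pow_nonneg hr.le n)
  have hpartial (N : ℕ) : ∑ n ∈ Finset.range N, a n * r ^ n ≤ g r := by
    have hcont : Continuous fun t : ℝ => ∑ n ∈ Finset.range N, a n * t ^ n := by fun_prop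
    refine le_of_tendsto_of_tendsto ((hcont.tendsto r).mono_left nhdsWithin_le_nhds) hgr
      (hev.mono fun t ht => ?_)
    exact sum_le_hasSum _ (fun n _ => mul_nonneg (ha n) (pow_nonneg ht.1 n)) (hg t ht)
  have hsum := summable_of_sum_range_le hnonneg hpartial
  refine hsum.hasSum_iff.mpr (le_antisymm (Real.tsum_le_of_sum_range_le hnonneg hpartial) ?_)
  refine le_of_tendsto hgr (hev.mono fun t ht => hasSum_le (fun n => ?_) (hg t ht) hsum.hasSum)
  exact mul_le_mul_of_nonneg_left (pow_le_pow_left₀ ht.1 ht.2.le n) (ha n)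

theorem hasSum_centralBinom_div_mul_pow {t : ℝ} (ht0 : 0 ≤ t) (ht : t ≤ 1 / 4) :
    HasSum (fun n => (Nat.centralBinom n : ℝ) / n * t ^ n)
      (2 * log 2 - 2 * log (1 + √(1 - 4 * t))) := by
  rcases ht.lt_or_eq with ht | rfl
  · exact hasSum_centralBinom_div_mul_pow_of_abs_lt (by rwa [abs_of_nonneg ht0])
  refine hasSum_mul_pow_of_nonneg_of_continuousWithinAt (by norm_num) (fun n => by positivity)
    (fun s hs => hasSum_centralBinom_div_mul_pow_of_abs_lt ?_) ?_
  · rw [abs_of_nonneg hs.1]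
    exact hs.2
  · have : 1 + √(1 - 4 * (1 / 4 : ℝ)) ≠ 0 := by norm_num
    refine ContinuousAt.continuousWithinAt ?_
    fun_prop (disch := exact this)

theorem hasSum_choose_mul_pow {𝕜 : Type*} [NormedField 𝕜] (k : ℕ) {x : 𝕜} (hx : ‖x‖ < 1) :
    HasSum (fun n => (n.choose k : 𝕜) * x ^ n) (x ^ k / (1 - x) ^ (k + 1)) := by
  refine (hasSum_nat_add_iff' k).mp ?_
  have hlow : ∑ i ∈ Finset.range k, (i.choose k : 𝕜) * x ^ i = 0 :=
    Finset.sum_eq_zero fun i hi => by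
      rw [Nat.choose_eq_zero_of_lt (Finset.mem_range.mp hi), Nat.cast_zero, zero_mul]
  have hterm (n : ℕ) :
      ((n + k).choose k : 𝕜) * x ^ (n + k) = x ^ k * ((n + k).choose k * x ^ n) := by
    ring
  rw [hlow, sub_zero, div_eq_mul_one_div]
  simpa only [hterm] using (hasSum_choose_mul_geometric_of_norm_lt_one k hx).mul_left (x ^ k)

theorem hasSum_choose_succ_div_mul_pow (k : ℕ) {x : ℝ} (hx : |x| < 1) :
    HasSum (fun n : ℕ => ((n + 1).choose (k + 1) : ℝ) / (n + 1) * x ^ (n + 1))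
      ((x / (1 - x)) ^ (k + 1) / (k + 1)) := by
  have hx1 : 1 - x ≠ 0 := by linarith [le_abs_self x]
  have hterm (n : ℕ) : ((n + 1).choose (k + 1) : ℝ) / (n + 1) * x ^ (n + 1) =
      x / (k + 1) * (n.choose k * x ^ n) := by
    have h : ((n + 1 : ℕ) : ℝ) * n.choose k = (n + 1).choose (k + 1) * (k + 1 : ℕ) := by
      exact_mod_cast Nat.add_one_mul_choose_eq n k
    push_cast at h
    field_simp
    linear_combination (-x * x ^ n) * h
  have hval : (x / (1 - x)) ^ (k + 1) / (k + 1) = x / (k + 1) * (x ^ k / (1 - x) ^ (k + 1)) := by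
    rw [div_pow]
    field_simp
    ring
  simpa only [hterm, hval] using (hasSum_choose_mul_pow k hx).mul_left (x / (k + 1))

theorem hasSum_centralBinom_mul_choose_succ_div_mul_pow (j : ℕ) {x : ℝ} (hx : |x| < 1) (y : ℝ) :
    HasSum (fun n : ℕ =>
        (Nat.centralBinom j * y ^ j) * (((n + 1).choose j : ℝ) / (n + 1) * x ^ (n + 1)))
      (Nat.centralBinom j / j * (x * y / (1 - x)) ^ j + if j = 0 then -log (1 - x) else 0) := by
  rcases j with _ | k
  · simpa [div_eq_inv_mul] using hasSum_pow_div_log_of_abs_lt_one hx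
  have hval : (Nat.centralBinom (k + 1) : ℝ) / (k + 1 : ℕ) * (x * y / (1 - x)) ^ (k + 1) =
      Nat.centralBinom (k + 1) * y ^ (k + 1) * ((x / (1 - x)) ^ (k + 1) / (k + 1)) := by
    rw [mul_comm x y, mul_div_assoc, mul_pow]
    push_cast
    ring
  simpa only [Nat.add_one_ne_zero, ↓reduceIte, add_zero, hval] using
    (hasSum_choose_succ_div_mul_pow k hx).mul_left (Nat.centralBinom (k + 1) * y ^ (k + 1))

theorem hasSum_swap_of_nonneg {α β : Type*} {f : α → β → ℝ} (hf : ∀ i j, 0 ≤ f i j)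
    {c : α → ℝ} {r : β → ℝ} {T : ℝ} (hc : ∀ i, HasSum (f i) (c i))
    (hr : ∀ j, HasSum (fun i => f i j) (r j)) (hT : HasSum c T) : HasSum r T := by
  have hsum : Summable fun p : α × β => f p.1 p.2 :=
    (summable_prod_of_nonneg fun p => hf p.1 p.2).mpr
      ⟨fun i => (hc i).summable, by simpa only [(hc _).tsum_eq] using hT.summable⟩
  have hF : HasSum (fun p : α × β => f p.1 p.2) T :=
    hT.unique (hsum.hasSum.prod_fiberwise hc) ▸ hsum.hasSum
  exact ((Equiv.prodComm β α).hasSum_iff.mpr hF).prod_fiberwise hr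

theorem two_mul_log_sqrt_add_sqrt {a b : ℝ} (ha : 0 < a) (hb : 0 ≤ b) :
    2 * log (√a + √b) = log a + 2 * log (1 + √(b / a)) := by
  have hsa : 0 < √a := sqrt_pos.mpr ha
  have h : 1 + √(b / a) = (√a + √b) / √a := by
    rw [sqrt_div hb]
    field_simp
  rw [h, log_div (by positivity) hsa.ne', log_sqrt ha.le]
  ring

/-- With `f_n(y) = Σ_{j=0}^n (1/n) C(n,j) C(2j,j) y^j` and `F(x,y) = Σ_{n≥1} f_n(y) x^n`,
for `0 < x < 1`, `y ≥ 0` with `4xy/(1-x) ≤ 1`: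
`F(x,y) = ln 4 - 2 ln(√(1-x) + √(1-x-4xy))`. -/
theorem generating_function_closed_form (x y : ℝ) (hx0 : 0 < x) (hx1 : x < 1)
    (hy : 0 ≤ y) (hxy : 4 * x * y / (1 - x) ≤ 1) :
    HasSum (fun n : ℕ =>
      (∑ j ∈ Finset.range (n + 2),
        (1 / (n + 1 : ℝ)) * ((n + 1).choose j : ℝ) * ((2 * j).choose j : ℝ) * y ^ j) *
        x ^ (n + 1))
      (Real.log 4 - 2 * Real.log (Real.sqrt (1 - x) + Real.sqrt (1 - x - 4 * x * y))) := by
  have hx : |x| < 1 := by rwa [abs_of_pos hx0]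
  have h1x : 0 < 1 - x := by linarith
  have hb : 0 ≤ 1 - x - 4 * x * y := by linarith [(div_le_one h1x).mp hxy]
  have ht : x * y / (1 - x) ≤ 1 / 4 := by
    linarith [show 4 * x * y / (1 - x) = 4 * (x * y / (1 - x)) by ring]
  have h4t : 1 - 4 * (x * y / (1 - x)) = (1 - x - 4 * x * y) / (1 - x) := by
    field_simp
  have hrow (n : ℕ) : HasSum (fun j : ℕ =>
      (Nat.centralBinom j * y ^ j) * (((n + 1).choose j : ℝ) / (n + 1) * x ^ (n + 1)))
      ((∑ j ∈ Finset.range (n + 2),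
        (1 / (n + 1 : ℝ)) * ((n + 1).choose j : ℝ) * ((2 * j).choose j : ℝ) * y ^ j) *
        x ^ (n + 1)) := by
    rw [Finset.sum_mul]
    convert hasSum_sum_of_ne_finset_zero (L := .unconditional ℕ) (s := Finset.range (n + 2))
      fun j hj => ?_ using 2 with j
    · simp only [Nat.centralBinom_eq_two_mul_choose]
      ring
    · rw [Finset.mem_range, not_lt] at hj
      simp [Nat.choose_eq_zero_of_lt (by omega : n + 1 < j)]
  refine hasSum_swap_of_nonneg (fun j n => by positivity)
    (fun j => hasSum_centralBinom_mul_choose_succ_div_mul_pow j hx y) hrow ?_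
  convert (hasSum_centralBinom_div_mul_pow (by positivity) ht).add
    (hasSum_ite_eq 0 (-log (1 - x))) using 1
  rw [two_mul_log_sqrt_add_sqrt h1x hb, ← h4t, show (4 : ℝ) = 2 ^ 2 by norm_num, log_pow]
  push_cast
  ring
end
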